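/- arXiv:2501.03744 — 4 statements merged into one kernel-verified Lean document; each statement's English description precedes it below -/
import Mathlib

section
/- Consider the inner moment problem: maximize ∫_S f dP over probability measures P on a compact set S ⊆ ℝ^n subject to μ_j − ε_j ≤ ∫_S ξ_j dP ≤ μ_j + ε_j for j = 1,…,n, where f is continuous. If there exists a feasible P (Slater-type condition with ε_j > 0 and μ ∈ int(conv(S))), then the optimal value equals the dual value: min over α ∈ ℝ, β¹, β² ≥ 0 of α + Σ_j (β¹_j(μ_j+ε_j) − β²_j(μ_j−ε_j)) subject to α + Σ_j (β¹_j − β²_j) ξ_j ≥ f(ξ) for all ξ ∈ S. -/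
/-!
Weak duality is the dual constraint integrated against a feasible `P`. For the converse, the
pairs (first moments of `P`, `∫ f dP`) over probability measures `P` carried by `S` form a convex
set `C` (mix the measures), and `C` misses (open `ε`-box around `μ`) × (primal value, `∞`).
Separate the two by a hyperplane; it is not vertical because `μ ∈ conv S` is the moment vector of
a point of `C` inside the box. So it is the graph of an affine majorant `α + ⟪b, ·⟫` of `f` on `S`
that stays below the primal value on the closed box, and at the vertex of the box chosen by the
signs of `b` it equals the dual objective at `β¹ = b⁺`, `β² = b⁻`.
-/

open MeasureTheory Set

theorem csSup_eq_csInf_of_forall_le {α : Type*} [ConditionallyCompleteLattice α] {V W : Set α}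
    (hV : V.Nonempty) (hW : W.Nonempty) (hle : ∀ v ∈ V, ∀ w ∈ W, v ≤ w)
    (hstrong : BddAbove V → ∃ w ∈ W, w ≤ sSup V) : sSup V = sInf W := by
  obtain ⟨v₀, hv₀⟩ := hV
  obtain ⟨w₀, hw₀⟩ := hW
  obtain ⟨w, hw, hwV⟩ := hstrong ⟨w₀, fun v hv => hle v hv w₀ hw₀⟩
  refine le_antisymm (csSup_le ⟨v₀, hv₀⟩ fun v hv => le_csInf ⟨w₀, hw₀⟩ (hle v hv)) ?_
  exact (csInf_le ⟨v₀, hle v₀ hv₀⟩ hw).trans hwV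

theorem StrongDual.apply_prod_eq {E : Type*} [AddCommGroup E] [Module ℝ E] [TopologicalSpace E]
    (φ : StrongDual ℝ (E × ℝ)) (p : E × ℝ) : φ p = φ (p.1, 0) + p.2 * φ (0, 1) := by
  conv_lhs => rw [show p = (p.1, 0) + p.2 • (0, 1) by simp]
  rw [map_add, map_smul, smul_eq_mul]

theorem exists_affine_majorant_le_on_closure {E : Type*} [AddCommGroup E] [Module ℝ E]
    [TopologicalSpace E] [IsTopologicalAddGroup E] [ContinuousSMul ℝ E]
    {C : Set (E × ℝ)} {U : Set E} {v : ℝ} (hC : Convex ℝ C) (hU : Convex ℝ U) (hUo : IsOpen U)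
    (hCU : ∀ p ∈ C, p.1 ∈ U → p.2 ≤ v) (hslater : ∃ p ∈ C, p.1 ∈ U) :
    ∃ (ℓ : StrongDual ℝ E) (α : ℝ), (∀ p ∈ C, p.2 ≤ α + ℓ p.1) ∧
      ∀ m ∈ closure U, α + ℓ m ≤ v := by
  have hdisj : Disjoint (U ×ˢ Ioi v) C := by
    rw [Set.disjoint_left]
    rintro p ⟨hpU, hpv⟩ hpC
    exact (hCU p hpC hpU).not_gt hpv
  obtain ⟨φ, u, hφU, hφC⟩ :=
    geometric_hahn_banach_open (hU.prod (convex_Ioi v)) (hUo.prod isOpen_Ioi) hC hdisj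
  set g : ℝ := -φ (0, 1)
  have hφ : ∀ p : E × ℝ, φ p = φ (p.1, 0) - p.2 * g := fun p => by
    rw [φ.apply_prod_eq p, mul_neg, sub_neg_eq_add]
  -- Slater: `U ×ˢ Ioi v` contains points arbitrarily high above some point of `C`, so the
  -- separating hyperplane cannot be vertical.
  have hg : 0 < g := by
    obtain ⟨p, hpC, hpU⟩ := hslater
    by_contra! hg
    have hup := hφU (p.1, max v p.2 + 1) ⟨hpU, (le_max_left v p.2).trans_lt (lt_add_one _)⟩
    have hp := hφC p hpC
    rw [hφ] at hup hp
    have hhigher : p.2 ≤ max v p.2 + 1 := by linarith [le_max_right v p.2]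
    linarith [mul_nonneg (sub_nonneg.2 hhigher) (neg_nonneg.2 hg)]
  set ℓ : StrongDual ℝ E := g⁻¹ • φ.comp (ContinuousLinearMap.inl ℝ E ℝ)
  set α : ℝ := -u / g
  have hφα : ∀ p : E × ℝ, φ p - u = g * (α + ℓ p.1 - p.2) := by
    intro p
    rw [hφ]
    simp only [ℓ, α, smul_apply, smul_eq_mul, ContinuousLinearMap.comp_apply,
      ContinuousLinearMap.inl_apply]
    field_simp
    ring
  refine ⟨ℓ, α, fun p hp => ?_, ?_⟩
  · have hp := hφα p ▸ sub_nonneg.2 (hφC p hp)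
    linarith [(mul_nonneg_iff_of_pos_left hg).1 hp]
  · have hUv : ∀ m ∈ U, α + ℓ m ≤ v := fun m hm => forall_gt_iff_le.mp fun s hs => by
      have h := hφα (m, s) ▸ sub_neg.2 (hφU (m, s) ⟨hm, hs⟩)
      linarith [(pos_iff_neg_of_mul_neg h).1 hg]
    exact closure_minimal hUv (isClosed_le (continuous_const.add ℓ.continuous) continuous_const)

theorem StrongDual.apply_eq_sum {ι : Type*} [Fintype ι] [DecidableEq ι]
    (ℓ : StrongDual ℝ (ι → ℝ)) (m : ι → ℝ) : ℓ m = ∑ j, ℓ (Pi.single j 1) * m j := by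
  conv_lhs => rw [← Finset.univ_sum_single m]
  rw [map_sum]
  refine Finset.sum_congr rfl fun j _ => ?_
  rw [mul_comm, ← smul_eq_mul, ← map_smul, ← Pi.single_smul, smul_eq_mul, mul_one]

theorem posPart_mul_add_sub_negPart_mul (x μ ε : ℝ) :
    x⁺ * (μ + ε) - x⁻ * (μ - ε) = x * if 0 ≤ x then μ + ε else μ - ε := by
  split_ifs with hx
  · simp [posPart_eq_self.2 hx, negPart_eq_zero.2 hx]
  · simp [posPart_eq_zero.2 (not_le.1 hx).le, negPart_eq_neg.2 (not_le.1 hx).le]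

theorem sum_sub_mul_le_of_mem_Icc {ι : Type*} [Fintype ι] {β1 β2 m μ ε : ι → ℝ}
    (hβ1 : 0 ≤ β1) (hβ2 : 0 ≤ β2) (hm : ∀ j, μ j - ε j ≤ m j ∧ m j ≤ μ j + ε j) :
    ∑ j, (β1 j - β2 j) * m j ≤ ∑ j, (β1 j * (μ j + ε j) - β2 j * (μ j - ε j)) :=
  Finset.sum_le_sum fun j _ => by
    nlinarith [mul_nonneg (hβ1 j) (sub_nonneg.2 (hm j).2),
      mul_nonneg (hβ2 j) (sub_nonneg.2 (hm j).1)]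

theorem Continuous.integrable_of_measure_compl_eq_zero {X E : Type*} [TopologicalSpace X]
    [MeasurableSpace X] [OpensMeasurableSpace X] [T2Space X] [NormedAddCommGroup E]
    {g : X → E} (hg : Continuous g) {S : Set X} (hS : IsCompact S) {P : Measure X}
    [IsFiniteMeasure P] (hP : P Sᶜ = 0) : Integrable g P := by
  have hPS : P.restrict S = P := Measure.restrict_eq_self_of_ae_mem (mem_ae_iff.mpr hP)
  simpa only [IntegrableOn, hPS] using hg.continuousOn.integrableOn_compact hS (μ := P)

section Mixture

variable {X E : Type*} [MeasurableSpace X] [NormedAddCommGroup E] [NormedSpace ℝ E]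
  {P Q : Measure X} {a b : ℝ}

theorem isProbabilityMeasure_ofReal_smul_add [IsProbabilityMeasure P] [IsProbabilityMeasure Q]
    (ha : 0 ≤ a) (hb : 0 ≤ b) (hab : a + b = 1) :
    IsProbabilityMeasure (ENNReal.ofReal a • P + ENNReal.ofReal b • Q) :=
  ⟨by simp [← ENNReal.ofReal_add ha hb, hab]⟩

theorem integral_ofReal_smul_add {g : X → E} (hP : Integrable g P) (hQ : Integrable g Q)
    (ha : 0 ≤ a) (hb : 0 ≤ b) :
    ∫ x, g x ∂(ENNReal.ofReal a • P + ENNReal.ofReal b • Q) =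
      a • ∫ x, g x ∂P + b • ∫ x, g x ∂Q := by
  rw [integral_add_measure (hP.smul_measure ENNReal.ofReal_ne_top)
    (hQ.smul_measure ENNReal.ofReal_ne_top), integral_smul_measure, integral_smul_measure,
    ENNReal.toReal_ofReal ha, ENNReal.toReal_ofReal hb]

end Mixture

section MomentProblem

variable {n : ℕ} {S : Set (Fin n → ℝ)} {f : (Fin n → ℝ) → ℝ}

def momentSet (S : Set (Fin n → ℝ)) (f : (Fin n → ℝ) → ℝ) : Set ((Fin n → ℝ) × ℝ) :=
  {p | ∃ P : Measure (Fin n → ℝ), IsProbabilityMeasure P ∧ P Sᶜ = 0 ∧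
    p = (fun j => ∫ ξ, ξ j ∂P, ∫ ξ, f ξ ∂P)}

theorem convex_momentSet (hS : IsCompact S) (hf : Continuous f) : Convex ℝ (momentSet S f) := by
  rintro _ ⟨P, hP, hPS, rfl⟩ _ ⟨Q, hQ, hQS, rfl⟩ a b ha hb hab
  have hint : ∀ {g : (Fin n → ℝ) → ℝ}, Continuous g →
      ∫ ξ, g ξ ∂(ENNReal.ofReal a • P + ENNReal.ofReal b • Q) =
        a * ∫ ξ, g ξ ∂P + b * ∫ ξ, g ξ ∂Q := fun hg =>
    integral_ofReal_smul_add (hg.integrable_of_measure_compl_eq_zero hS hPS)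
      (hg.integrable_of_measure_compl_eq_zero hS hQS) ha hb
  refine ⟨ENNReal.ofReal a • P + ENNReal.ofReal b • Q,
    isProbabilityMeasure_ofReal_smul_add ha hb hab, by simp [hPS, hQS], ?_⟩
  ext
  · simp [hint (continuous_apply _)]
  · simp [hint hf]

theorem mk_mem_momentSet {ξ : Fin n → ℝ} (hξ : ξ ∈ S) : (ξ, f ξ) ∈ momentSet S f :=
  ⟨Measure.dirac ξ, inferInstance, by simp [hξ], by simp⟩

theorem convexHull_subset_image_fst_momentSet (hS : IsCompact S) (hf : Continuous f) :
    convexHull ℝ S ⊆ Prod.fst '' momentSet S f :=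
  convexHull_min (fun _ hξ => ⟨_, mk_mem_momentSet hξ, rfl⟩)
    ((convex_momentSet hS hf).linear_image (LinearMap.fst ℝ _ ℝ))

theorem integral_le_of_le_affine (hS : IsCompact S) (hf : Continuous f)
    {P : Measure (Fin n → ℝ)} [IsProbabilityMeasure P] (hPS : P Sᶜ = 0) {α : ℝ}
    {b : Fin n → ℝ} (hmaj : ∀ ξ ∈ S, f ξ ≤ α + ∑ j, b j * ξ j) :
    ∫ ξ, f ξ ∂P ≤ α + ∑ j, b j * ∫ ξ, ξ j ∂P := by
  have hcoord : ∀ j, Integrable (fun ξ : Fin n → ℝ => b j * ξ j) P := fun j =>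
    (continuous_const.mul (continuous_apply j)).integrable_of_measure_compl_eq_zero hS hPS
  calc ∫ ξ, f ξ ∂P ≤ ∫ ξ, (α + ∑ j, b j * ξ j) ∂P :=
        integral_mono_ae (hf.integrable_of_measure_compl_eq_zero hS hPS)
          ((integrable_const α).add (integrable_finsetSum _ fun j _ => hcoord j))
          (by filter_upwards [mem_ae_iff.mpr hPS] with ξ hξ using hmaj ξ hξ)
    _ = α + ∑ j, b j * ∫ ξ, ξ j ∂P := by
        rw [integral_add (integrable_const α) (integrable_finsetSum _ fun j _ => hcoord j),
          integral_finsetSum _ fun j _ => hcoord j]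
        simp [integral_const_mul]

theorem exists_dual_feasible_le {μ ε : Fin n → ℝ} (hS : IsCompact S) (hf : Continuous f)
    (hε : ∀ j, 0 < ε j) (hμ : μ ∈ convexHull ℝ S) {v : ℝ}
    (hv : ∀ P : Measure (Fin n → ℝ), IsProbabilityMeasure P → P Sᶜ = 0 →
      (∀ j, μ j - ε j ≤ ∫ ξ, ξ j ∂P ∧ ∫ ξ, ξ j ∂P ≤ μ j + ε j) → ∫ ξ, f ξ ∂P ≤ v) :
    ∃ (α : ℝ) (β1 β2 : Fin n → ℝ), 0 ≤ β1 ∧ 0 ≤ β2 ∧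
      (∀ ξ ∈ S, f ξ ≤ α + ∑ j, (β1 j - β2 j) * ξ j) ∧
      α + ∑ j, (β1 j * (μ j + ε j) - β2 j * (μ j - ε j)) ≤ v := by
  set U : Set (Fin n → ℝ) := univ.pi fun j => Ioo (μ j - ε j) (μ j + ε j)
  have hCU : ∀ p ∈ momentSet S f, p.1 ∈ U → p.2 ≤ v := by
    rintro _ ⟨P, hP, hPS, rfl⟩ hm
    exact hv P hP hPS fun j => ⟨(hm j (mem_univ j)).1.le, (hm j (mem_univ j)).2.le⟩
  have hslater : ∃ p ∈ momentSet S f, p.1 ∈ U := by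
    obtain ⟨p, hp, rfl⟩ := convexHull_subset_image_fst_momentSet hS hf hμ
    exact ⟨p, hp, fun j _ => ⟨sub_lt_self _ (hε j), lt_add_of_pos_right _ (hε j)⟩⟩
  obtain ⟨ℓ, α, hmaj, hle⟩ := exists_affine_majorant_le_on_closure (convex_momentSet hS hf)
    (convex_pi fun j _ => convex_Ioo _ _) (isOpen_set_pi finite_univ fun j _ => isOpen_Ioo)
    hCU hslater
  set b : Fin n → ℝ := fun j => ℓ (Pi.single j 1)
  refine ⟨α, b⁺, b⁻, posPart_nonneg b, negPart_nonneg b, fun ξ hξ => ?_, ?_⟩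
  · calc f ξ ≤ α + ℓ ξ := hmaj _ (mk_mem_momentSet hξ)
      _ = α + ∑ j, (b⁺ j - b⁻ j) * ξ j := by rw [ℓ.apply_eq_sum]; simp [b]
  · -- the dual objective is the affine bound at the vertex of the box selected by the signs of `b`
    set c : Fin n → ℝ := fun j => if 0 ≤ b j then μ j + ε j else μ j - ε j
    have hc : c ∈ closure U := by
      rw [closure_pi_set]
      intro j _
      dsimp only
      rw [closure_Ioo ((sub_lt_self _ (hε j)).trans (lt_add_of_pos_right _ (hε j))).ne]
      simp only [c]
      split_ifs <;> constructor <;> linarith [hε j]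
    calc α + ∑ j, (b⁺ j * (μ j + ε j) - b⁻ j * (μ j - ε j)) = α + ℓ c := by
          rw [ℓ.apply_eq_sum]
          simp [posPart_mul_add_sub_negPart_mul, c, b]
      _ ≤ v := hle c hc

end MomentProblem

theorem moment_problem_strong_duality_general {n : ℕ} (S : Set (Fin n → ℝ))
    (hScompact : IsCompact S)
    (f : (Fin n → ℝ) → ℝ) (hf : Continuous f)
    (μ ε : Fin n → ℝ) (hε : ∀ j, 0 < ε j)
    (hslater : μ ∈ interior (convexHull ℝ S))
    (hfeas : ∃ P : Measure (Fin n → ℝ), IsProbabilityMeasure P ∧ P Sᶜ = 0 ∧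
      ∀ j : Fin n, μ j - ε j ≤ ∫ ξ, ξ j ∂P ∧ ∫ ξ, ξ j ∂P ≤ μ j + ε j) :
    sSup {v : ℝ | ∃ P : Measure (Fin n → ℝ), IsProbabilityMeasure P ∧ P Sᶜ = 0 ∧
        (∀ j : Fin n, μ j - ε j ≤ ∫ ξ, ξ j ∂P ∧ ∫ ξ, ξ j ∂P ≤ μ j + ε j) ∧
        v = ∫ ξ, f ξ ∂P}
    = sInf {v : ℝ | ∃ (α : ℝ) (β1 β2 : Fin n → ℝ), 0 ≤ β1 ∧ 0 ≤ β2 ∧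
        (∀ ξ ∈ S, f ξ ≤ α + ∑ j, (β1 j - β2 j) * ξ j) ∧
        v = α + ∑ j, (β1 j * (μ j + ε j) - β2 j * (μ j - ε j))} := by
  refine csSup_eq_csInf_of_forall_le ?_ ?_ ?_ fun hbdd => ?_
  · obtain ⟨P, hP, hPS, hPm⟩ := hfeas
    exact ⟨_, P, hP, hPS, hPm, rfl⟩
  · obtain ⟨M, hM⟩ := hScompact.bddAbove_image hf.continuousOn
    exact ⟨_, M, 0, 0, le_rfl, le_rfl, fun ξ hξ => by simpa using hM ⟨ξ, hξ, rfl⟩, rfl⟩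
  · rintro _ ⟨P, hP, hPS, hPm, rfl⟩ _ ⟨α, β1, β2, hβ1, hβ2, hmaj, rfl⟩
    exact (integral_le_of_le_affine hScompact hf hPS hmaj).trans
      (add_le_add le_rfl (sum_sub_mul_le_of_mem_Icc hβ1 hβ2 hPm))
  · obtain ⟨α, β1, β2, hβ1, hβ2, hmaj, hval⟩ :=
      exists_dual_feasible_le hScompact hf hε (interior_subset hslater)
        fun P hP hPS hPm => le_csSup hbdd ⟨P, hP, hPS, hPm, rfl⟩
    exact ⟨_, ⟨α, β1, β2, hβ1, hβ2, hmaj, rfl⟩, hval⟩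

/-- Strong duality for the inner moment problem: maximizing `∫_S f dP` over
probability measures `P` supported on a compact set `S ⊆ ℝⁿ` with first moments
in `[μ_j − ε_j, μ_j + ε_j]`, for continuous `f`, equals the optimal value of the
semi-infinite dual with multipliers `α ∈ ℝ` and `β¹, β² ≥ 0`, under a
Slater-type condition (`ε > 0`, `μ ∈ int(conv S)`, and feasibility). -/
theorem moment_problem_strong_duality {n : ℕ} (S : Set (Fin n → ℝ))
    (hScompact : IsCompact S) (hSne : S.Nonempty)
    (f : (Fin n → ℝ) → ℝ) (hf : Continuous f)
    (μ ε : Fin n → ℝ) (hε : ∀ j, 0 < ε j)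
    (hslater : μ ∈ interior (convexHull ℝ S))
    (hfeas : ∃ P : Measure (Fin n → ℝ), IsProbabilityMeasure P ∧ P Sᶜ = 0 ∧
      ∀ j : Fin n, μ j - ε j ≤ ∫ ξ, ξ j ∂P ∧ ∫ ξ, ξ j ∂P ≤ μ j + ε j) :
    sSup {v : ℝ | ∃ P : Measure (Fin n → ℝ), IsProbabilityMeasure P ∧ P Sᶜ = 0 ∧
        (∀ j : Fin n, μ j - ε j ≤ ∫ ξ, ξ j ∂P ∧ ∫ ξ, ξ j ∂P ≤ μ j + ε j) ∧
        v = ∫ ξ, f ξ ∂P}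
    = sInf {v : ℝ | ∃ (α : ℝ) (β1 β2 : Fin n → ℝ), 0 ≤ β1 ∧ 0 ≤ β2 ∧
        (∀ ξ ∈ S, f ξ ≤ α + ∑ j, (β1 j - β2 j) * ξ j) ∧
        v = α + ∑ j, (β1 j * (μ j + ε j) - β2 j * (μ j - ε j))} :=
  moment_problem_strong_duality_general S hScompact f hf μ ε hε hslater hfeas
end

section
/- Let g(x) = min(a + Σ_i c_i x_i, b) with a, b ∈ ℝ, c_i ≥ 0, and x binary, and let β ≥ 0 be bounded by β̄. Then the product g(x)·β equals Υ where Υ is characterized by the mixed-integer constraints: there exists a binary a' and auxiliary products Φ_i = x_i β (McCormick-linearized) such that Σ_i c_i x_i ≤ (b−a) + M a', Σ_i c_i x_i ≥ (b−a) − M(1−a'), Σ_i c_i Φ_i + aβ ≤ Υ + M a', bβ ≤ Υ + M(1−a'), for sufficiently large M, when the objective minimizes Υ. Specifically, the constraint system admits a feasible Υ with Υ = g(x)·β, and any feasible Υ satisfies Υ ≥ g(x)·β when strict comparison Σ_i c_i x_i ≠ b−a holds. -/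
/-!
Write `s = ∑ i, c i * x i`, so that `∑ i, c i * (x i * β) = s * β` and `0 ≤ s ≤ ∑ i, c i`.
The binary `a'` selects the branch of the minimum: `a' = 0` forces `s ≤ b - a`, where the minimum
is `a + s` and the third constraint reads `(a + s) * β ≤ Υ`; `a' = 1` forces `b - a ≤ s`, where the
minimum is `b` and the fourth constraint reads `b * β ≤ Υ`. Conversely, choosing `a'` by the sign
of `b - a - s` and `Υ = min (a + s) b * β`, the two remaining constraints are slack because `M`
dominates both `|b - a - s|` and `|b - a - s| * β`.
-/

open Finset

/-- The big-M system for `Υ = min (a + s) b * β`; `φ` stands for the linearized product `s * β`. -/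
def MinMulBigM (a b β M s φ a' Υ : ℝ) : Prop :=
  (a' = 0 ∨ a' = 1) ∧ s ≤ b - a + M * a' ∧ b - a - M * (1 - a') ≤ s ∧
    φ + a * β ≤ Υ + M * a' ∧ b * β ≤ Υ + M * (1 - a')

theorem min_mul_le_of_minMulBigM {a b β M s a' Υ : ℝ}
    (h : MinMulBigM a b β M s (s * β) a' Υ) : min (a + s) b * β ≤ Υ := by
  obtain ⟨ha' | ha', h₁, h₂, h₃, h₄⟩ := h <;> subst ha'
  · rw [min_eq_left (by linarith)]
    linarith
  · rw [min_eq_right (by linarith)]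
    linarith

theorem exists_minMulBigM {a b β M s : ℝ} (h₁ : |b - a - s| ≤ M) (h₂ : |b - a - s| * β ≤ M) :
    ∃ a', MinMulBigM a b β M s (s * β) a' (min (a + s) b * β) := by
  by_cases hs : s ≤ b - a
  · rw [abs_of_nonneg (by linarith)] at h₁ h₂
    rw [min_eq_left (by linarith)]
    exact ⟨0, Or.inl rfl, by linarith, by linarith, by linarith, by linarith⟩
  · rw [abs_of_neg (by linarith)] at h₁ h₂
    rw [min_eq_right (by linarith)]
    exact ⟨1, Or.inr rfl, by linarith, by linarith, by linarith, by linarith⟩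

theorem abs_sub_sub_le_bigM {a b s K β βbar M : ℝ} (hs : s ∈ Set.Icc 0 K)
    (hβ : β ∈ Set.Icc 0 βbar) (hM : K + |b - a| + (|a| + |b| + K) * βbar ≤ M) :
    |b - a - s| ≤ M ∧ |b - a - s| * β ≤ M := by
  obtain ⟨hs₀, hsK⟩ := hs
  obtain ⟨hβ₀, hββ⟩ := hβ
  have hdiff : |b - a - s| ≤ |b - a| + s := by
    simpa [abs_of_nonneg hs₀] using abs_sub (b - a) s
  have hba : |b - a| ≤ |a| + |b| := by
    simpa [add_comm] using abs_sub b a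
  have hK : 0 ≤ K := hs₀.trans hsK
  have hslack : 0 ≤ (|a| + |b| + K) * βbar := by
    have := hβ₀.trans hββ
    positivity
  refine ⟨by linarith, ?_⟩
  calc |b - a - s| * β ≤ (|a| + |b| + K) * βbar :=
        mul_le_mul (by linarith) hββ hβ₀ (by positivity)
    _ ≤ M := by linarith [abs_nonneg (b - a)]

theorem sum_mul_mem_Icc {ι : Type*} (t : Finset ι) {c x : ι → ℝ} (hc : ∀ i, 0 ≤ c i)
    (hx : ∀ i, x i ∈ Set.Icc 0 1) : ∑ i ∈ t, c i * x i ∈ Set.Icc 0 (∑ i ∈ t, c i) :=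
  ⟨sum_nonneg fun i _ => mul_nonneg (hc i) (hx i).1,
    sum_le_sum fun i _ => mul_le_of_le_one_right (hc i) (hx i).2⟩

/-- Big-M linearization of the product `g(x)·β` where
`g(x) = min(a + Σ_i c_i x_i, b)`, `x` binary, `β ∈ [0, β̄]`.
The constraint system (with McCormick-exact products `Φ_i = x_i β`) admits a
feasible binary `a'` and `Υ = g(x)·β`; and any feasible `(a', Υ)` satisfies
`Υ ≥ g(x)·β` whenever `Σ_i c_i x_i ≠ b − a`. -/
theorem bigM_min_product_linearization {n : ℕ}
    (a b βbar β M : ℝ) (c x : Fin n → ℝ)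
    (hc : ∀ i, 0 ≤ c i) (hx : ∀ i, x i = 0 ∨ x i = 1)
    (hβ : β ∈ Set.Icc 0 βbar)
    (hM : (∑ i, c i) + |b - a| + (|a| + |b| + ∑ i, c i) * βbar ≤ M) :
    (∃ a' : ℝ, (a' = 0 ∨ a' = 1) ∧
      (∑ i, c i * x i) ≤ (b - a) + M * a' ∧
      (b - a) - M * (1 - a') ≤ ∑ i, c i * x i ∧
      (∑ i, c i * (x i * β)) + a * β ≤ min (a + ∑ i, c i * x i) b * β + M * a' ∧
      b * β ≤ min (a + ∑ i, c i * x i) b * β + M * (1 - a')) ∧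
    (∀ a' Υ : ℝ, (a' = 0 ∨ a' = 1) →
      (∑ i, c i * x i) ≤ (b - a) + M * a' →
      (b - a) - M * (1 - a') ≤ ∑ i, c i * x i →
      (∑ i, c i * (x i * β)) + a * β ≤ Υ + M * a' →
      b * β ≤ Υ + M * (1 - a') →
      (∑ i, c i * x i) ≠ b - a →
      min (a + ∑ i, c i * x i) b * β ≤ Υ) := by
  have hprod : ∑ i, c i * (x i * β) = (∑ i, c i * x i) * β := by
    simp only [sum_mul, mul_assoc]
  have hx01 : ∀ i, x i ∈ Set.Icc (0 : ℝ) 1 := fun i => by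
    rcases hx i with h | h <;> simp [h]
  obtain ⟨h₁, h₂⟩ := abs_sub_sub_le_bigM (sum_mul_mem_Icc univ hc hx01) hβ hM
  rw [hprod]
  exact ⟨exists_minMulBigM h₁ h₂, fun a' Υ ha' hs₁ hs₂ hΦ hb _ =>
    min_mul_le_of_minMulBigM ⟨ha', hs₁, hs₂, hΦ, hb⟩⟩
end

section
/- If the second-stage LP f(x,y,ξ) = min{q^T u : W u = h(ξ), T u ≤ g(y), u ≥ 0} has relatively complete recourse (feasible for all ξ in a compact box S) and is bounded, then max_{ξ∈S} [f(x,y,ξ) − r^T ξ] equals the optimal value of the single-level problem maximizing q^T u − r^T ξ over (u, duals, ξ) satisfying primal feasibility, dual feasibility, and complementary slackness, with ξ ranging over S. -/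
open Matrix Finset

set_option linter.unusedSectionVars false
set_option linter.unusedVariables false
set_option maxHeartbeats 1000000

section ConeClosed

variable {n m : Type*} [Fintype n] [Fintype m] [DecidableEq n]

/-- The cone generated by the vectors `v i`, `i ∈ S`. -/
def coneOf (v : n → (m → ℝ)) (S : Finset n) : Set (m → ℝ) :=
  {y | ∃ c : n → ℝ, 0 ≤ c ∧ y = ∑ i ∈ S, c i • v i}

lemma coneOf_reduce (v : n → (m → ℝ)) (S : Finset n) (c d : n → ℝ)
    (hc : 0 ≤ c) (hd : ∑ i ∈ S, d i • v i = 0) (hd0 : ∀ i ∉ S, d i = 0)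
    {i0 : n} (hi0S : i0 ∈ S) (hi0 : 0 < d i0) :
    ∃ i1 ∈ S, (∑ i ∈ S, c i • v i) ∈ coneOf v (S.erase i1) := by
  classical
  set T : Finset n := S.filter (fun i => 0 < d i) with hT
  have hTne : T.Nonempty := ⟨i0, by simp [hT, hi0S, hi0]⟩
  obtain ⟨i1, hi1T, hmin⟩ := T.exists_min_image (fun i => c i / d i) hTne
  have hi1S : i1 ∈ S := (Finset.mem_filter.mp hi1T).1
  have hdi1 : 0 < d i1 := (Finset.mem_filter.mp hi1T).2
  set t : ℝ := c i1 / d i1 with ht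
  have htnn : 0 ≤ t := div_nonneg (hc i1) hdi1.le
  set c' : n → ℝ := fun i => c i - t * d i with hc'
  have hc'nn : 0 ≤ c' := by
    intro i
    by_cases hiT : i ∈ T
    · have hdi : 0 < d i := (Finset.mem_filter.mp hiT).2
      have : t ≤ c i / d i := hmin i hiT
      have : t * d i ≤ c i := by
        rw [← le_div_iff₀ hdi]; exact this
      simpa [hc'] using sub_nonneg.mpr this
    · have hdi : d i ≤ 0 := by
        by_cases hiS : i ∈ S
        · by_contra hlt
          exact hiT (Finset.mem_filter.mpr ⟨hiS, lt_of_not_ge hlt⟩)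
        · simp [hd0 i hiS]
      have : t * d i ≤ 0 := mul_nonpos_of_nonneg_of_nonpos htnn hdi
      simpa [hc'] using le_trans this (hc i)
  have hc'i1 : c' i1 = 0 := by
    simp [hc', ht, div_mul_cancel₀ _ (ne_of_gt hdi1)]
  have hsum : ∑ i ∈ S, c' i • v i = ∑ i ∈ S, c i • v i := by
    have : ∀ i, c' i • v i = c i • v i - t • (d i • v i) := by
      intro i; simp [hc', sub_smul, smul_smul]
    simp_rw [this, Finset.sum_sub_distrib, ← Finset.smul_sum, hd, smul_zero, sub_zero]
  refine ⟨i1, hi1S, c', hc'nn, ?_⟩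
  rw [Finset.sum_erase S (by simp [hc'i1]), hsum]

lemma coneOf_caratheodory (v : n → (m → ℝ)) (S : Finset n) :
    ∀ y ∈ coneOf v S, ∃ S' ⊆ S,
      LinearIndependent ℝ (fun i : ↥S' => v i) ∧ y ∈ coneOf v S' := by
  classical
  induction S using Finset.strongInductionOn with
  | _ S ih =>
    intro y hy
    by_cases hli : LinearIndependent ℝ (fun i : ↥S => v i)
    · exact ⟨S, le_refl _, hli, hy⟩
    · obtain ⟨g, hgsum, j, hgj⟩ := Fintype.not_linearIndependent_iff.mp hli
      obtain ⟨c, hc, rfl⟩ := hy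
      set d : n → ℝ := fun i => if h : i ∈ S then g ⟨i, h⟩ else 0 with hd
      have hdsum : ∑ i ∈ S, d i • v i = 0 := by
        rw [← Finset.sum_attach S (fun i => d i • v i)]
        simpa [hd] using hgsum
      have hd0 : ∀ i ∉ S, d i = 0 := by intro i hi; simp [hd, hi]
      have hstep : ∃ i1 ∈ S, (∑ i ∈ S, c i • v i) ∈ coneOf v (S.erase i1) := by
        rcases lt_trichotomy (d ↑j) 0 with hneg | hzero | hpos
        · refine coneOf_reduce v S c (-d) hc ?_ (by intro i hi; simp [hd0 i hi]) j.2 ?_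
          · simpa [neg_smul] using congrArg Neg.neg hdsum
          · simpa using hneg
        · exact absurd (by simpa [hd, j.2] using hzero) hgj
        · exact coneOf_reduce v S c d hc hdsum hd0 j.2 hpos
      obtain ⟨i1, hi1, hmem⟩ := hstep
      obtain ⟨S', hS', hli', hy'⟩ := ih (S.erase i1) (Finset.erase_ssubset hi1) _ hmem
      exact ⟨S', le_trans hS' (Finset.erase_subset _ _), hli', hy'⟩

/-- The linear map sending coefficients (on `S`) to the combination. -/
noncomputable def combMap (v : n → (m → ℝ)) (S : Finset n) : (↥S → ℝ) →ₗ[ℝ] (m → ℝ) where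
  toFun := fun c => ∑ i : ↥S, c i • v ↑i
  map_add' := by intro a b; simp [add_smul, Finset.sum_add_distrib]
  map_smul' := by intro r a; simp [smul_smul, Finset.smul_sum]

lemma coneOf_isClosed_of_linearIndependent (v : n → (m → ℝ)) (S : Finset n)
    (hli : LinearIndependent ℝ (fun i : ↥S => v i)) : IsClosed (coneOf v S) := by
  classical
  set B := combMap v S with hB
  have hker : LinearMap.ker B = ⊥ := by
    rw [LinearMap.ker_eq_bot']
    intro c hc
    have := Fintype.linearIndependent_iff.mp hli c (by simpa [hB, combMap] using hc)
    exact funext this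
  obtain ⟨L, hL⟩ := B.exists_leftInverse_of_injective hker
  have hLB : ∀ c : ↥S → ℝ, L (B c) = c := by
    intro c
    simpa using LinearMap.congr_fun hL c
  have hsum_eq : ∀ c : n → ℝ, ∑ i ∈ S, c i • v i = B (fun i : ↥S => c ↑i) := by
    intro c
    rw [← Finset.sum_attach S (fun i => c i • v i)]
    rfl
  apply IsSeqClosed.isClosed
  intro f y hf hy
  choose c hc0 hcE using hf
  set ck : ℕ → (↥S → ℝ) := fun k => fun i => c k ↑i with hck
  have hfk : ∀ k, f k = B (ck k) := by intro k; rw [hcE k, hsum_eq]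
  have hLcont : Continuous L := L.continuous_of_finiteDimensional
  have hBcont : Continuous B := B.continuous_of_finiteDimensional
  set cinf : ↥S → ℝ := L y with hcinf
  have hctend : Filter.Tendsto ck Filter.atTop (nhds cinf) := by
    have : Filter.Tendsto (fun k => L (f k)) Filter.atTop (nhds (L y)) :=
      (hLcont.tendsto y).comp hy
    convert this using 1
    funext k; rw [hfk k, hLB]
  have hcinf0 : ∀ i, 0 ≤ cinf i := by
    intro i
    have : Filter.Tendsto (fun k => ck k i) Filter.atTop (nhds (cinf i)) :=
      (tendsto_pi_nhds.mp hctend) i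
    exact ge_of_tendsto' this (fun k => hc0 k ↑i)
  have hy' : y = B cinf := by
    have h1 : Filter.Tendsto (fun k => B (ck k)) Filter.atTop (nhds (B cinf)) :=
      (hBcont.tendsto cinf).comp hctend
    have h2 : Filter.Tendsto (fun k => B (ck k)) Filter.atTop (nhds y) := by
      simpa [← hfk] using hy
    exact (tendsto_nhds_unique h2 h1)
  refine ⟨fun i => if h : i ∈ S then cinf ⟨i, h⟩ else 0, ?_, ?_⟩
  · intro i; by_cases h : i ∈ S <;> simp [h, hcinf0]
  · rw [hsum_eq, hy']
    congr 1
    funext i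
    simp [i.2]

lemma coneOf_mono (v : n → (m → ℝ)) {S S' : Finset n} (h : S ⊆ S') :
    coneOf v S ⊆ coneOf v S' := by
  rintro y ⟨c, hc, rfl⟩
  refine ⟨fun i => if i ∈ S then c i else 0,
    fun i => by dsimp only; split; exacts [hc i, le_refl 0], ?_⟩
  rw [← Finset.sum_subset h (fun i _ hi => by simp [hi])]
  exact Finset.sum_congr rfl fun i hi => by simp [hi]

theorem cone_isClosed (v : n → (m → ℝ)) : IsClosed (coneOf v Finset.univ) := by
  classical
  have : coneOf v Finset.univ =
      ⋃ (S : Finset n) (_ : LinearIndependent ℝ (fun i : ↥S => v i)), coneOf v S := by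
    ext y
    constructor
    · intro hy
      obtain ⟨S', _, hli, hy'⟩ := coneOf_caratheodory v Finset.univ y hy
      exact Set.mem_iUnion.mpr ⟨S', Set.mem_iUnion.mpr ⟨hli, hy'⟩⟩
    · intro hy
      obtain ⟨S, hS⟩ := Set.mem_iUnion.mp hy
      obtain ⟨_, hy'⟩ := Set.mem_iUnion.mp hS
      exact coneOf_mono v (Finset.subset_univ S) hy'
  rw [this]
  exact isClosed_iUnion_of_finite (fun S => isClosed_iUnion_of_finite
    (fun hli => coneOf_isClosed_of_linearIndependent v S hli))

end ConeClosed

theorem farkas_eq {n m : Type*} [Fintype n] [Fintype m] [DecidableEq n]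
    (A : Matrix m n ℝ) (b : m → ℝ) :
    (∃ x : n → ℝ, 0 ≤ x ∧ A.mulVec x = b) ∨
    (∃ y : m → ℝ, 0 ≤ A.transpose.mulVec y ∧ b ⬝ᵥ y < 0) := by
  classical
  set v : n → (m → ℝ) := fun j i => A i j with hv
  have hmv : ∀ x : n → ℝ, A.mulVec x = ∑ j, x j • v j := by
    intro x; funext i
    simp [Matrix.mulVec, dotProduct, hv, Finset.sum_apply, mul_comm]
  by_cases hb : b ∈ coneOf v Finset.univ
  · obtain ⟨c, hc, rfl⟩ := hb
    exact Or.inl ⟨c, hc, by rw [hmv]⟩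
  · right
    set e := EuclideanSpace.equiv m ℝ with he
    set C : ConvexCone ℝ (EuclideanSpace ℝ m) :=
      { carrier := ⇑e ⁻¹' (coneOf v Finset.univ)
        smul_mem' := by
          rintro t ht x ⟨c, hc, hx⟩
          refine ⟨fun j => t * c j, fun j => mul_nonneg ht.le (hc j), ?_⟩
          show e (t • x) = _
          rw [_root_.map_smul, hx, Finset.smul_sum]
          exact Finset.sum_congr rfl fun j _ => by rw [smul_smul]
        add_mem' := by
          rintro x ⟨c, hc, hx⟩ y ⟨c', hc', hy⟩
          refine ⟨fun j => c j + c' j, fun j => add_nonneg (hc j) (hc' j), ?_⟩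
          show e (x + y) = _
          rw [map_add, hx, hy, ← Finset.sum_add_distrib]
          exact Finset.sum_congr rfl fun j _ => by rw [add_smul] } with hC
    have heapp : ∀ (z : EuclideanSpace ℝ m) (i : m), e z i = z i := fun z i => rfl
    have hesymm : ∀ (w : m → ℝ) (i : m), e.symm w i = w i := fun w i => rfl
    have hCne : (C : Set (EuclideanSpace ℝ m)).Nonempty :=
      ⟨0, ⟨0, le_refl _, by simp⟩⟩
    have hCcl : IsClosed (C : Set (EuclideanSpace ℝ m)) :=
      (cone_isClosed v).preimage e.continuous
    have hbC : (e.symm b) ∉ C := by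
      intro hmem
      exact hb hmem
    have hC0 : (0 : EuclideanSpace ℝ m) ∈ C := ⟨0, le_refl _, by simp⟩
    let P : ProperCone ℝ (EuclideanSpace ℝ m) :=
      { carrier := C
        add_mem' := fun ha hb => C.add_mem ha hb
        zero_mem' := hC0
        smul_mem' := fun c x hx => by
          rcases eq_zero_or_pos c with h | h
          · rw [h, zero_smul]; exact hC0
          · exact C.smul_mem (show (0:ℝ) < c.1 from h) hx
        isClosed' := hCcl }
    obtain ⟨y, hy1, hy2⟩ := ProperCone.hyperplane_separation' P (x₀ := e.symm b) hbC
    refine ⟨e y, ?_, ?_⟩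
    · intro j
      have hvj : (e.symm (v j)) ∈ C := by
        refine Set.mem_preimage.mpr ?_
        refine ⟨fun j' => if j' = j then 1 else 0, fun j' => by dsimp; split <;> norm_num, ?_⟩
        simp
      have := hy1 _ hvj
      rw [PiLp.inner_apply] at this
      simp only [RCLike.inner_apply, starRingEnd_apply, star_trivial] at this
      simpa [Matrix.mulVec, dotProduct, hv, mul_comm, heapp, hesymm] using this
    · rw [PiLp.inner_apply] at hy2
      simpa [dotProduct, mul_comm, heapp, hesymm] using hy2

/-- Farkas variant: equality rows `A x = bE` and inequality rows `B x ≤ bI`, `x ≥ 0`. -/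
theorem farkas_mixed {nn mE mI : Type*} [Fintype nn] [Fintype mE] [Fintype mI]
    [DecidableEq nn] [DecidableEq mI]
    (A : Matrix mE nn ℝ) (B : Matrix mI nn ℝ) (bE : mE → ℝ) (bI : mI → ℝ) :
    (∃ x : nn → ℝ, 0 ≤ x ∧ A.mulVec x = bE ∧ B.mulVec x ≤ bI) ∨
    (∃ (y : mE → ℝ) (z : mI → ℝ), 0 ≤ z ∧
      0 ≤ A.transpose.mulVec y + B.transpose.mulVec z ∧ bE ⬝ᵥ y + bI ⬝ᵥ z < 0) := by
  classical
  set M : Matrix (mE ⊕ mI) (nn ⊕ mI) ℝ := fun i j =>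
    match i, j with
    | Sum.inl i, Sum.inl j => A i j
    | Sum.inl _, Sum.inr _ => 0
    | Sum.inr i, Sum.inl j => B i j
    | Sum.inr i, Sum.inr i' => if i = i' then 1 else 0 with hM
  rcases farkas_eq M (Sum.elim bE bI) with ⟨x', hx', hfeas⟩ | ⟨y', hy', hlt⟩
  · left
    refine ⟨fun j => x' (Sum.inl j), fun j => hx' _, ?_, ?_⟩
    · funext i
      have := congrFun hfeas (Sum.inl i)
      simpa [hM, Matrix.mulVec, dotProduct, Fintype.sum_sum_type] using this
    · intro i
      have := congrFun hfeas (Sum.inr i)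
      simp only [hM, Matrix.mulVec, dotProduct, Fintype.sum_sum_type,
        Sum.elim_inr] at this
      have hslack : 0 ≤ x' (Sum.inr i) := hx' _
      have hsum : (∑ i' : mI, (if i = i' then (1:ℝ) else 0) * x' (Sum.inr i'))
          = x' (Sum.inr i) := by
        simp [ite_mul]
      rw [hsum] at this
      simp only [Matrix.mulVec, dotProduct]
      linarith
  · right
    refine ⟨fun i => y' (Sum.inl i), fun i => y' (Sum.inr i), ?_, ?_, ?_⟩
    · intro i
      have := hy' (Sum.inr i)
      simpa [hM, Matrix.mulVec, dotProduct, Matrix.transpose,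
        Fintype.sum_sum_type, ite_mul] using this
    · intro j
      have := hy' (Sum.inl j)
      simpa [hM, Matrix.mulVec, dotProduct, Matrix.transpose,
        Fintype.sum_sum_type] using this
    · simpa [dotProduct, Fintype.sum_sum_type] using hlt

/-- Farkas variant: free variables `y`, nonneg variables `τ`, all rows inequalities. -/
theorem farkas_free {mm n1 n2 : Type*} [Fintype mm] [Fintype n1] [Fintype n2]
    [DecidableEq mm] [DecidableEq n1] [DecidableEq n2]
    (U : Matrix mm n1 ℝ) (V : Matrix mm n2 ℝ) (c : mm → ℝ) :
    (∃ (y : n1 → ℝ) (τ : n2 → ℝ), 0 ≤ τ ∧ U.mulVec y + V.mulVec τ ≤ c) ∨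
    (∃ w : mm → ℝ, 0 ≤ w ∧ U.transpose.mulVec w = 0 ∧
      0 ≤ V.transpose.mulVec w ∧ c ⬝ᵥ w < 0) := by
  classical
  set M : Matrix mm ((n1 ⊕ n1) ⊕ (n2 ⊕ mm)) ℝ := fun i j =>
    match j with
    | Sum.inl (Sum.inl j) => U i j
    | Sum.inl (Sum.inr j) => -U i j
    | Sum.inr (Sum.inl j) => V i j
    | Sum.inr (Sum.inr i') => if i = i' then 1 else 0 with hM
  rcases farkas_eq M c with ⟨x', hx', hfeas⟩ | ⟨w, hw, hlt⟩
  · left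
    refine ⟨fun j => x' (Sum.inl (Sum.inl j)) - x' (Sum.inl (Sum.inr j)),
      fun j => x' (Sum.inr (Sum.inl j)), fun j => hx' _, ?_⟩
    intro i
    have := congrFun hfeas i
    simp only [hM, Matrix.mulVec, dotProduct, Fintype.sum_sum_type] at this
    have hsum : (∑ i' : mm, (if i = i' then (1:ℝ) else 0) * x' (Sum.inr (Sum.inr i')))
        = x' (Sum.inr (Sum.inr i)) := by simp [ite_mul]
    rw [hsum] at this
    simp only [neg_mul, Finset.sum_neg_distrib] at this
    have hslack : 0 ≤ x' (Sum.inr (Sum.inr i)) := hx' _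
    have hU : (U.mulVec (fun j => x' (Sum.inl (Sum.inl j)) - x' (Sum.inl (Sum.inr j)))) i
        = ∑ j, U i j * x' (Sum.inl (Sum.inl j)) - ∑ j, U i j * x' (Sum.inl (Sum.inr j)) := by
      simp [Matrix.mulVec, dotProduct, mul_sub, Finset.sum_sub_distrib]
    have hV : (V.mulVec (fun j => x' (Sum.inr (Sum.inl j)))) i
        = ∑ j, V i j * x' (Sum.inr (Sum.inl j)) := by
      simp [Matrix.mulVec, dotProduct]
    rw [Pi.add_apply, hU, hV]
    linarith
  · right
    refine ⟨w, ?_, ?_, ?_, hlt⟩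
    · intro i
      have := hw (Sum.inr (Sum.inr i))
      simpa [hM, Matrix.mulVec, dotProduct, Matrix.transpose, ite_mul] using this
    · funext j
      have h1 := hw (Sum.inl (Sum.inl j))
      have h2 := hw (Sum.inl (Sum.inr j))
      simp only [hM, Matrix.mulVec, dotProduct, Matrix.transpose, Matrix.of_apply,
        Pi.zero_apply, neg_mul, Finset.sum_neg_distrib] at h1 h2 ⊢
      linarith
    · intro j
      have := hw (Sum.inr (Sum.inl j))
      simpa [hM, Matrix.mulVec, dotProduct, Matrix.transpose] using this

lemma dot_le_dot_left {m : Type*} [Fintype m] {z a b : m → ℝ} (hz : 0 ≤ z) (h : a ≤ b) :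
    z ⬝ᵥ a ≤ z ⬝ᵥ b :=
  Finset.sum_le_sum fun i _ => mul_le_mul_of_nonneg_left (h i) (hz i)

lemma dot_le_dot_right {m : Type*} [Fintype m] {u a b : m → ℝ} (hu : 0 ≤ u) (h : a ≤ b) :
    a ⬝ᵥ u ≤ b ⬝ᵥ u :=
  Finset.sum_le_sum fun i _ => mul_le_mul_of_nonneg_right (h i) (hu i)

lemma dot_nonneg' {m : Type*} [Fintype m] {a b : m → ℝ} (ha : 0 ≤ a) (hb : 0 ≤ b) :
    0 ≤ a ⬝ᵥ b :=
  Finset.sum_nonneg fun i _ => mul_nonneg (ha i) (hb i)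

lemma transpose_dot {m n : Type*} [Fintype m] [Fintype n]
    (M : Matrix m n ℝ) (y : m → ℝ) (x : n → ℝ) :
    (M.transpose.mulVec y) ⬝ᵥ x = y ⬝ᵥ (M.mulVec x) := by
  rw [Matrix.mulVec_transpose, ← Matrix.dotProduct_mulVec]

theorem lp_strong_duality {p q d : ℕ}
    (W : Matrix (Fin p) (Fin d) ℝ) (T : Matrix (Fin q) (Fin d) ℝ)
    (b : Fin p → ℝ) (g : Fin q → ℝ) (qc : Fin d → ℝ)
    (hfeas : ∃ u : Fin d → ℝ, 0 ≤ u ∧ W.mulVec u = b ∧ T.mulVec u ≤ g)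
    (hbdd : BddBelow {v : ℝ | ∃ u : Fin d → ℝ, 0 ≤ u ∧ W.mulVec u = b ∧
      T.mulVec u ≤ g ∧ v = qc ⬝ᵥ u}) :
    ∃ (u : Fin d → ℝ) (lam : Fin p → ℝ) (tau : Fin q → ℝ),
      0 ≤ u ∧ W.mulVec u = b ∧ T.mulVec u ≤ g ∧ 0 ≤ tau ∧
      W.transpose.mulVec lam - T.transpose.mulVec tau ≤ qc ∧
      (∀ i, u i * (qc i - W.transpose.mulVec lam i + T.transpose.mulVec tau i) = 0) ∧
      (∀ j, tau j * (g j - T.mulVec u j) = 0) ∧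
      qc ⬝ᵥ u = sInf {v : ℝ | ∃ u : Fin d → ℝ, 0 ≤ u ∧ W.mulVec u = b ∧
        T.mulVec u ≤ g ∧ v = qc ⬝ᵥ u} := by
  classical
  set Sv : Set ℝ := {v : ℝ | ∃ u : Fin d → ℝ, 0 ≤ u ∧ W.mulVec u = b ∧
      T.mulVec u ≤ g ∧ v = qc ⬝ᵥ u} with hSv
  obtain ⟨u0, hu0, hWu0, hTu0⟩ := hfeas
  have hSvne : Sv.Nonempty := ⟨qc ⬝ᵥ u0, u0, hu0, hWu0, hTu0, rfl⟩
  set vstar : ℝ := sInf Sv with hvstar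
  have hlow : ∀ u : Fin d → ℝ, 0 ≤ u → W.mulVec u = b → T.mulVec u ≤ g →
      vstar ≤ qc ⬝ᵥ u := fun u h1 h2 h3 => csInf_le hbdd ⟨u, h1, h2, h3, rfl⟩
  -- Step 1 : primal attainment
  set B' : Matrix (Fin q ⊕ Unit) (Fin d) ℝ := fun i j =>
    match i with
    | Sum.inl i => T i j
    | Sum.inr _ => qc j with hB'
  have step1 : ∃ u : Fin d → ℝ, 0 ≤ u ∧ W.mulVec u = b ∧ T.mulVec u ≤ g ∧
      qc ⬝ᵥ u = vstar := by
    rcases farkas_mixed W B' b (Sum.elim g (fun _ => vstar)) with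
      ⟨u, hu, hWu, hBu⟩ | ⟨y, z', hz', hpos, hlt⟩
    · have hTu : T.mulVec u ≤ g := by
        intro i
        have := hBu (Sum.inl i)
        simpa [hB', Matrix.mulVec, dotProduct] using this
      have hqu : qc ⬝ᵥ u ≤ vstar := by
        have := hBu (Sum.inr ())
        simpa [hB', Matrix.mulVec, dotProduct] using this
      exact ⟨u, hu, hWu, hTu, le_antisymm hqu (hlow u hu hWu hTu)⟩
    · exfalso
      set z : Fin q → ℝ := fun i => z' (Sum.inl i) with hz
      set mu : ℝ := z' (Sum.inr ()) with hmu
      have hmu0 : 0 ≤ mu := hz' _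
      have hz0 : 0 ≤ z := fun i => hz' _
      have hBt : ∀ j, B'.transpose.mulVec z' j = T.transpose.mulVec z j + mu * qc j := by
        intro j
        simp [hB', Matrix.mulVec, dotProduct, Matrix.transpose,
          Fintype.sum_sum_type, mul_comm]
        rfl
      have hlt' : b ⬝ᵥ y + g ⬝ᵥ z + mu * vstar < 0 := by
        have : (Sum.elim g (fun _ => vstar)) ⬝ᵥ z' = g ⬝ᵥ z + vstar * mu := by
          simp [dotProduct, Fintype.sum_sum_type]
          rfl
        rw [this] at hlt
        linarith
      have hkey : ∀ u : Fin d → ℝ, 0 ≤ u → W.mulVec u = b → T.mulVec u ≤ g →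
          0 ≤ b ⬝ᵥ y + g ⬝ᵥ z + mu * (qc ⬝ᵥ u) := by
        intro u hu hWu hTu
        have h1 : 0 ≤ (W.transpose.mulVec y + B'.transpose.mulVec z') ⬝ᵥ u :=
          dot_nonneg' hpos hu
        have h2 : (W.transpose.mulVec y + B'.transpose.mulVec z') ⬝ᵥ u
            = y ⬝ᵥ b + z ⬝ᵥ (T.mulVec u) + mu * (qc ⬝ᵥ u) := by
          rw [add_dotProduct, transpose_dot, hWu]
          have : B'.transpose.mulVec z' ⬝ᵥ u
              = (T.transpose.mulVec z) ⬝ᵥ u + mu * (qc ⬝ᵥ u) := by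
            have hfun : B'.transpose.mulVec z'
                = fun j => T.transpose.mulVec z j + mu * qc j := funext hBt
            rw [hfun]
            simp [dotProduct, Finset.sum_add_distrib, Finset.mul_sum, mul_assoc,
              add_mul]
          rw [this, transpose_dot]
          ring
        rw [h2] at h1
        have h3 : z ⬝ᵥ (T.mulVec u) ≤ z ⬝ᵥ g := dot_le_dot_left hz0 hTu
        have h4 : y ⬝ᵥ b = b ⬝ᵥ y := dotProduct_comm _ _
        have h5 : z ⬝ᵥ g = g ⬝ᵥ z := dotProduct_comm _ _
        linarith
      rcases eq_or_lt_of_le hmu0 with hmu0' | hmu0'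
      · have := hkey u0 hu0 hWu0 hTu0
        rw [← hmu0'] at this hlt'
        linarith
      · set L : ℝ := -(b ⬝ᵥ y + g ⬝ᵥ z) / mu with hL
        have hLlow : L ≤ vstar := by
          apply le_csInf hSvne
          rintro w ⟨u, hu, hWu, hTu, rfl⟩
          have := hkey u hu hWu hTu
          rw [hL, div_le_iff₀ hmu0']
          nlinarith
        nlinarith [mul_le_mul_of_nonneg_left hLlow hmu0,
          mul_div_cancel₀ (-(b ⬝ᵥ y + g ⬝ᵥ z)) (ne_of_gt hmu0')]
  obtain ⟨ustar, hustar, hWustar, hTustar, hqustar⟩ := step1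
  -- Step 2 : dual attainment
  set U : Matrix (Fin d ⊕ Unit) (Fin p) ℝ := fun i j =>
    match i with
    | Sum.inl i => W j i
    | Sum.inr _ => -b j with hU
  set V : Matrix (Fin d ⊕ Unit) (Fin q) ℝ := fun i j =>
    match i with
    | Sum.inl i => -T j i
    | Sum.inr _ => g j with hV
  have step2 : ∃ (lam : Fin p → ℝ) (tau : Fin q → ℝ), 0 ≤ tau ∧
      W.transpose.mulVec lam - T.transpose.mulVec tau ≤ qc ∧
      vstar ≤ b ⬝ᵥ lam - g ⬝ᵥ tau := by
    rcases farkas_free U V (Sum.elim qc (fun _ => -vstar)) with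
      ⟨lam, tau, htau, hle⟩ | ⟨w, hw, hUw, hVw, hcw⟩
    · refine ⟨lam, tau, htau, ?_, ?_⟩
      · intro j
        have := hle (Sum.inl j)
        simpa [hU, hV, Matrix.mulVec, dotProduct, Matrix.transpose, neg_mul,
          Finset.sum_neg_distrib, sub_eq_add_neg] using this
      · have := hle (Sum.inr ())
        simp only [hU, hV, Matrix.mulVec, dotProduct, Pi.add_apply,
          Sum.elim_inr, neg_mul] at this
        simp only [dotProduct]
        rw [Finset.sum_neg_distrib] at this
        linarith [this]
    · exfalso
      set lam' : Fin d → ℝ := fun j => w (Sum.inl j) with hlam'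
      set mu : ℝ := w (Sum.inr ()) with hmu
      have hmu0 : 0 ≤ mu := hw _
      have hlam'0 : 0 ≤ lam' := fun j => hw _
      have hWlam : W.mulVec lam' = mu • b := by
        funext i
        have h := congrFun hUw i
        simp only [hU, Matrix.mulVec, dotProduct, Matrix.transpose, Matrix.of_apply,
          Fintype.sum_sum_type, Pi.zero_apply, Finset.univ_unique,
          Finset.sum_singleton] at h
        show ∑ x, W i x * w (Sum.inl x) = w (Sum.inr ()) * b i
        linarith [h]
      have hTlam : T.mulVec lam' ≤ mu • g := by
        intro i
        have h := hVw i
        simp only [hV, Matrix.mulVec, dotProduct, Matrix.transpose, Matrix.of_apply,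
          Fintype.sum_sum_type, Pi.zero_apply, Finset.univ_unique,
          Finset.sum_singleton, neg_mul, Finset.sum_neg_distrib] at h
        show ∑ x, T i x * w (Sum.inl x) ≤ w (Sum.inr ()) * g i
        linarith [h]
      have hclt : qc ⬝ᵥ lam' < mu * vstar := by
        simp only [dotProduct, Fintype.sum_sum_type, Finset.univ_unique,
          Finset.sum_singleton, Sum.elim_inl, Sum.elim_inr, neg_mul] at hcw
        show ∑ x, qc x * w (Sum.inl x) < w (Sum.inr ()) * vstar
        linarith [hcw]
      rcases eq_or_lt_of_le hmu0 with hmu0' | hmu0'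
      · -- mu = 0 : recession direction, contradicts boundedness
        obtain ⟨mlow, hmlow⟩ := hbdd
        have hqclam : qc ⬝ᵥ lam' < 0 := by rw [← hmu0'] at hclt; linarith
        set t : ℝ := (mlow - qc ⬝ᵥ u0 - 1) / (qc ⬝ᵥ lam') with hts
        have hmlow0 : mlow ≤ qc ⬝ᵥ u0 := hmlow ⟨u0, hu0, hWu0, hTu0, rfl⟩
        have ht0 : 0 ≤ t := by
          rw [hts]
          exact div_nonneg_of_nonpos (by linarith) (by linarith)
        have hfeas' : qc ⬝ᵥ u0 + t * (qc ⬝ᵥ lam') ∈ Sv := by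
          refine ⟨u0 + t • lam', ?_, ?_, ?_, ?_⟩
          · intro i
            have := mul_nonneg ht0 (hlam'0 i)
            have := hu0 i
            simp only [Pi.add_apply, Pi.smul_apply, smul_eq_mul, Pi.zero_apply] at *
            linarith
          · rw [Matrix.mulVec_add, Matrix.mulVec_smul, hWlam, ← hmu0']
            simp [hWu0]
          · rw [Matrix.mulVec_add, Matrix.mulVec_smul]
            intro i
            have h1 : (T.mulVec lam') i ≤ 0 := by
              have := hTlam i
              rw [← hmu0'] at this
              simpa using this
            have h2 := hTu0 i
            have := mul_nonneg ht0 (neg_nonneg.mpr h1)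
            simp only [Pi.add_apply, Pi.smul_apply, smul_eq_mul] at *
            linarith
          · rw [dotProduct_add, dotProduct_smul]
            simp [smul_eq_mul]
        have hval : qc ⬝ᵥ u0 + t * (qc ⬝ᵥ lam') = mlow - 1 := by
          rw [hts, div_mul_cancel₀ _ (ne_of_lt hqclam)]
          ring
        have := hmlow hfeas'
        rw [hval] at this
        linarith
      · -- mu > 0 : scaled point beats vstar
        set u' : Fin d → ℝ := mu⁻¹ • lam' with hu'
        have hu'0 : 0 ≤ u' := fun i =>
          mul_nonneg (inv_nonneg.mpr hmu0) (hlam'0 i)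
        have hWu' : W.mulVec u' = b := by
          rw [hu', Matrix.mulVec_smul, hWlam, smul_smul, inv_mul_cancel₀ (ne_of_gt hmu0'),
            one_smul]
        have hTu' : T.mulVec u' ≤ g := by
          intro i
          have := hTlam i
          have h2 : mu⁻¹ * ((T.mulVec lam') i) ≤ mu⁻¹ * (mu * g i) :=
            mul_le_mul_of_nonneg_left (by simpa using this) (inv_nonneg.mpr hmu0)
          rw [← mul_assoc, inv_mul_cancel₀ (ne_of_gt hmu0'), one_mul] at h2
          simpa [hu', Matrix.mulVec_smul]
        have hqu' : qc ⬝ᵥ u' < vstar := by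
          have h2 : mu⁻¹ * (qc ⬝ᵥ lam') < mu⁻¹ * (mu * vstar) :=
            (mul_lt_mul_iff_right₀ (inv_pos.mpr hmu0')).mpr hclt
          rw [← mul_assoc, inv_mul_cancel₀ (ne_of_gt hmu0'), one_mul] at h2
          simpa [hu', dotProduct_smul, smul_eq_mul] using h2
        exact absurd (hlow u' hu'0 hWu' hTu') (not_le.mpr hqu')
  obtain ⟨lam, tau, htau, hdual, hge⟩ := step2
  -- combine : complementary slackness
  have hwk1 : (W.transpose.mulVec lam - T.transpose.mulVec tau) ⬝ᵥ ustar
      = b ⬝ᵥ lam - tau ⬝ᵥ (T.mulVec ustar) := by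
    rw [sub_dotProduct, transpose_dot, transpose_dot, hWustar,
      dotProduct_comm lam b]
  have hA : 0 ≤ qc ⬝ᵥ ustar - (W.transpose.mulVec lam - T.transpose.mulVec tau) ⬝ᵥ ustar :=
    sub_nonneg.mpr (dot_le_dot_right hustar hdual)
  have hBB : 0 ≤ tau ⬝ᵥ g - tau ⬝ᵥ (T.mulVec ustar) :=
    sub_nonneg.mpr (dot_le_dot_left htau hTustar)
  have hsum0 : (qc ⬝ᵥ ustar - (W.transpose.mulVec lam - T.transpose.mulVec tau) ⬝ᵥ ustar)
      + (tau ⬝ᵥ g - tau ⬝ᵥ (T.mulVec ustar)) ≤ 0 := by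
    rw [hwk1]
    have h5 : tau ⬝ᵥ g = g ⬝ᵥ tau := dotProduct_comm _ _
    linarith [hge, hqustar.le, hqustar.ge]
  have hA0 : qc ⬝ᵥ ustar - (W.transpose.mulVec lam - T.transpose.mulVec tau) ⬝ᵥ ustar = 0 := by
    linarith
  have hB0 : tau ⬝ᵥ g - tau ⬝ᵥ (T.mulVec ustar) = 0 := by linarith
  refine ⟨ustar, lam, tau, hustar, hWustar, hTustar, htau, hdual, ?_, ?_, hqustar⟩
  · -- complementary slackness for u
    intro i
    have hterm : ∀ i : Fin d, 0 ≤ ustar i *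
        (qc i - W.transpose.mulVec lam i + T.transpose.mulVec tau i) := by
      intro i
      apply mul_nonneg (hustar i)
      have := hdual i
      simp only [Pi.sub_apply] at this
      linarith
    have hsum : ∑ i, ustar i *
        (qc i - W.transpose.mulVec lam i + T.transpose.mulVec tau i) = 0 := by
      have : qc ⬝ᵥ ustar - (W.transpose.mulVec lam - T.transpose.mulVec tau) ⬝ᵥ ustar
          = ∑ i, ustar i *
            (qc i - W.transpose.mulVec lam i + T.transpose.mulVec tau i) := by
        simp only [dotProduct, Pi.sub_apply, ← Finset.sum_sub_distrib]
        exact Finset.sum_congr rfl fun i _ => by ring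
      rw [← this, hA0]
    exact (Finset.sum_eq_zero_iff_of_nonneg (fun i _ => hterm i)).mp hsum i (Finset.mem_univ i)
  · -- complementary slackness for tau
    intro j
    have hterm : ∀ j : Fin q, 0 ≤ tau j * (g j - T.mulVec ustar j) := by
      intro j
      apply mul_nonneg (htau j)
      have := hTustar j
      linarith
    have hsum : ∑ j, tau j * (g j - T.mulVec ustar j) = 0 := by
      have : tau ⬝ᵥ g - tau ⬝ᵥ (T.mulVec ustar)
          = ∑ j, tau j * (g j - T.mulVec ustar j) := by
        simp only [dotProduct, ← Finset.sum_sub_distrib]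
        exact Finset.sum_congr rfl fun j _ => by ring
      rw [← this, hB0]
    exact (Finset.sum_eq_zero_iff_of_nonneg (fun j _ => hterm j)).mp hsum j (Finset.mem_univ j)

/-- KKT-based single-level reformulation: if the second-stage LP
`f(ξ) = min {qᵀu : Wu = Hξ + h₀, Tu ≤ g, u ≥ 0}` has relatively complete
recourse and is bounded over a compact box `S`, then
`max_{ξ∈S} [f(ξ) − rᵀξ]` equals the optimal value of the single-level problem
maximizing `qᵀu − rᵀξ` over `(u, λ, τ, ξ)` satisfying primal feasibility,
dual feasibility and complementary slackness, with `ξ ∈ S`. -/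
theorem kkt_single_level_reformulation {p q d k : ℕ}
    (W : Matrix (Fin p) (Fin d) ℝ) (T : Matrix (Fin q) (Fin d) ℝ)
    (H : Matrix (Fin p) (Fin k) ℝ) (h0 : Fin p → ℝ) (g : Fin q → ℝ)
    (qc : Fin d → ℝ) (r : Fin k → ℝ) (lo hi : Fin k → ℝ)
    (hlohi : lo ≤ hi)
    (hrec : ∀ ξ : Fin k → ℝ, (∀ j, ξ j ∈ Set.Icc (lo j) (hi j)) →
      ∃ u : Fin d → ℝ, 0 ≤ u ∧ W.mulVec u = H.mulVec ξ + h0 ∧ T.mulVec u ≤ g)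
    (hbdd : ∀ ξ : Fin k → ℝ, (∀ j, ξ j ∈ Set.Icc (lo j) (hi j)) →
      BddBelow {v : ℝ | ∃ u : Fin d → ℝ, 0 ≤ u ∧ W.mulVec u = H.mulVec ξ + h0 ∧
        T.mulVec u ≤ g ∧ v = qc ⬝ᵥ u}) :
    sSup {v : ℝ | ∃ ξ : Fin k → ℝ, (∀ j, ξ j ∈ Set.Icc (lo j) (hi j)) ∧
        v = sInf {w : ℝ | ∃ u : Fin d → ℝ, 0 ≤ u ∧ W.mulVec u = H.mulVec ξ + h0 ∧
              T.mulVec u ≤ g ∧ w = qc ⬝ᵥ u} - r ⬝ᵥ ξ}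
    = sSup {v : ℝ | ∃ (u : Fin d → ℝ) (lam : Fin p → ℝ) (tau : Fin q → ℝ)
          (ξ : Fin k → ℝ),
        (∀ j, ξ j ∈ Set.Icc (lo j) (hi j)) ∧
        0 ≤ u ∧ W.mulVec u = H.mulVec ξ + h0 ∧ T.mulVec u ≤ g ∧
        0 ≤ tau ∧ W.transpose.mulVec lam - T.transpose.mulVec tau ≤ qc ∧
        (∀ i, u i * (qc i - W.transpose.mulVec lam i + T.transpose.mulVec tau i) = 0) ∧
        (∀ j, tau j * (g j - T.mulVec u j) = 0) ∧
        v = qc ⬝ᵥ u - r ⬝ᵥ ξ} := by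
  apply congrArg
  ext v
  constructor
  · rintro ⟨ξ, hξ, rfl⟩
    obtain ⟨u, lam, tau, hu, hWu, hTu, htau, hdual, hcs1, hcs2, hval⟩ :=
      lp_strong_duality W T (H.mulVec ξ + h0) g qc (hrec ξ hξ) (hbdd ξ hξ)
    exact ⟨u, lam, tau, ξ, hξ, hu, hWu, hTu, htau, hdual, hcs1, hcs2, by rw [← hval]⟩
  · rintro ⟨u, lam, tau, ξ, hξ, hu, hWu, hTu, htau, hdual, hcs1, hcs2, rfl⟩
    refine ⟨ξ, hξ, ?_⟩
    have hmem : qc ⬝ᵥ u ∈ {w : ℝ | ∃ u : Fin d → ℝ, 0 ≤ u ∧ W.mulVec u = H.mulVec ξ + h0 ∧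
        T.mulVec u ≤ g ∧ w = qc ⬝ᵥ u} := ⟨u, hu, hWu, hTu, rfl⟩
    -- weak duality : qc ⬝ᵥ u equals the dual value, which bounds every primal value
    have key1 : qc ⬝ᵥ u = (W.transpose.mulVec lam - T.transpose.mulVec tau) ⬝ᵥ u := by
      have hz : ∑ i, (qc i - (W.transpose.mulVec lam i - T.transpose.mulVec tau i)) * u i
          = 0 := by
        rw [Finset.sum_congr rfl (fun i _ => show _ = (0:ℝ) from by
          have := hcs1 i; ring_nf; ring_nf at this; linarith)]
        simp
      have : qc ⬝ᵥ u - (W.transpose.mulVec lam - T.transpose.mulVec tau) ⬝ᵥ u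
          = ∑ i, (qc i - (W.transpose.mulVec lam i - T.transpose.mulVec tau i)) * u i := by
        simp only [dotProduct, Pi.sub_apply, ← Finset.sum_sub_distrib]
        exact Finset.sum_congr rfl fun i _ => by ring
      rw [hz] at this
      linarith
    have key2 : tau ⬝ᵥ (T.mulVec u) = tau ⬝ᵥ g := by
      have hz : ∑ j, tau j * (g j - T.mulVec u j) = 0 :=
        Finset.sum_congr rfl (fun j _ => hcs2 j) ▸ by simp [hcs2]
      have : tau ⬝ᵥ g - tau ⬝ᵥ (T.mulVec u) = ∑ j, tau j * (g j - T.mulVec u j) := by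
        simp only [dotProduct, ← Finset.sum_sub_distrib]
        exact Finset.sum_congr rfl fun j _ => by ring
      rw [hz] at this
      linarith
    have hsInf : sInf {w : ℝ | ∃ u : Fin d → ℝ, 0 ≤ u ∧ W.mulVec u = H.mulVec ξ + h0 ∧
        T.mulVec u ≤ g ∧ w = qc ⬝ᵥ u} = qc ⬝ᵥ u := by
      apply le_antisymm (csInf_le (hbdd ξ hξ) hmem)
      apply le_csInf ⟨_, hmem⟩
      rintro w ⟨u', hu', hWu', hTu', rfl⟩
      have h1 : (W.transpose.mulVec lam - T.transpose.mulVec tau) ⬝ᵥ u' ≤ qc ⬝ᵥ u' :=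
        dot_le_dot_right hu' hdual
      have h2 : (W.transpose.mulVec lam - T.transpose.mulVec tau) ⬝ᵥ u'
          = lam ⬝ᵥ (H.mulVec ξ + h0) - tau ⬝ᵥ (T.mulVec u') := by
        rw [sub_dotProduct, transpose_dot, transpose_dot, hWu']
      have h3 : tau ⬝ᵥ (T.mulVec u') ≤ tau ⬝ᵥ g := dot_le_dot_left htau hTu'
      have h4 : qc ⬝ᵥ u = lam ⬝ᵥ (H.mulVec ξ + h0) - tau ⬝ᵥ g := by
        rw [key1, sub_dotProduct, transpose_dot, transpose_dot, hWu, key2]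
      linarith
    rw [hsInf]
end

section
/- Monotone convergence of the C&CG bounds: in Algorithm 1, the sequence of lower bounds (LB) is nondecreasing across iterations (when master problems are solved to optimality), the sequence of upper bounds (UB) is nonincreasing, and LB ≤ optimal value ≤ UB at every iteration; consequently, if the support set S is finite with K elements, the algorithm terminates with LB = UB after at most K iterations. -/
/-!
Every master problem minimizes the worst case over a subset of the scenarios, so it relaxes the
full problem and any master over more scenarios; this makes the lower bounds nondecreasing and
bounded by `opt`. The upper bounds are running minima of full costs of feasible points. If the
scenario separated at iteration `n` already belongs to the master's subset, the master objective
at `xs n` is the full cost, so `LB n ≥ UB n`; otherwise the subset gains a new scenario of `K`,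
which can happen fewer than `K.card` times.
-/

open Finset

namespace Finset

variable {ι : Type*}

theorem card_add_eq_card_of_forall_lt_notMem [DecidableEq ι] {T : ℕ → Finset ι} {sel : ℕ → ι}
    (hT : ∀ n, T (n + 1) = insert (sel n) (T n)) :
    ∀ n, (∀ m < n, sel m ∉ T m) → #(T 0) + n = #(T n)
  | 0, _ => rfl
  | n + 1, h => by
    rw [hT n, card_insert_of_notMem (h n n.lt_succ_self), ← add_assoc,
      card_add_eq_card_of_forall_lt_notMem hT n fun m hm => h m (hm.trans n.lt_succ_self)]

theorem exists_lt_card_mem_of_insert [DecidableEq ι] {K : Finset ι} {T : ℕ → Finset ι}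
    {sel : ℕ → ι} (hT : ∀ n, T (n + 1) = insert (sel n) (T n)) (hTK : ∀ n, T n ⊆ K)
    (hT₀ : (T 0).Nonempty) : ∃ n < #K, sel n ∈ T n := by
  by_contra! h
  have hcard := card_add_eq_card_of_forall_lt_notMem hT #K h
  have hle := card_le_card (hTK #K)
  have hpos := hT₀.card_pos
  omega

theorem sup'_eq_sup'_of_subset_of_forall_le {α β : Type*} [SemilatticeSup α] {s t : Finset β}
    {f : β → α} (hst : s ⊆ t) {i : β} (hi : i ∈ s) (hmax : ∀ j ∈ t, f j ≤ f i) :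
    s.sup' ⟨i, hi⟩ f = t.sup' ⟨i, hst hi⟩ f :=
  (sup'_mono f hst _).antisymm (sup'_le _ _ fun j hj => (hmax j hj).trans (le_sup' f hi))

end Finset

theorem add_sup'_le_of_forall_le_of_subset {X ι α : Type*} [LinearOrder α] [AddCommMonoid α]
    [IsOrderedAddMonoid α] {F : Set X} {ψ : X → α} {c : X → ι → α} {S S' : Finset ι}
    (hS : S.Nonempty) (hSS' : S ⊆ S') {x y : X}
    (hx : ∀ x' ∈ F, ψ x + S.sup' hS (c x) ≤ ψ x' + S.sup' hS (c x')) (hy : y ∈ F) :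
    ψ x + S.sup' hS (c x) ≤ ψ y + S'.sup' (hS.mono hSS') (c y) :=
  (hx y hy).trans (add_le_add_right (sup'_mono _ hSS' hS) _)

/-- Monotone convergence of the C&CG bounds: the lower bounds `LB n` produced by
masters solved to optimality over growing scenario subsets `T n ⊆ K` are
nondecreasing, the incumbent upper bounds `UB n` are nonincreasing,
`LB n ≤ opt ≤ UB n` at every iteration, and when the scenario set `K` is finite
the algorithm terminates with `LB = UB` after at most `K.card` iterations. -/
theorem ccg_monotone_convergence {X ι : Type*} [DecidableEq ι]
    (K : Finset ι) (hK : K.Nonempty)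
    (F : Set X) (ψ : X → ℝ) (c : X → ι → ℝ)
    (T : ℕ → Finset ι) (xs : ℕ → X) (sel : ℕ → ι)
    (hTne : ∀ n, (T n).Nonempty)
    (hTK : ∀ n, T n ⊆ K)
    (hTsucc : ∀ n, T (n + 1) = insert (sel n) (T n))
    (hfeas : ∀ n, xs n ∈ F)
    (hsel : ∀ n, sel n ∈ K ∧ ∀ i ∈ K, c (xs n) i ≤ c (xs n) (sel n))
    (hopt : ∀ n, ∀ x' ∈ F,
      ψ (xs n) + (T n).sup' (hTne n) (c (xs n))
        ≤ ψ x' + (T n).sup' (hTne n) (c x'))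
    (hbdd : BddBelow {v : ℝ | ∃ x ∈ F, v = ψ x + K.sup' hK (c x)})
    (LB UB : ℕ → ℝ) (opt : ℝ)
    (hLB : ∀ n, LB n = ψ (xs n) + (T n).sup' (hTne n) (c (xs n)))
    (hUB : ∀ n, UB n = (Finset.range (n + 1)).inf' Finset.nonempty_range_add_one
      (fun m => ψ (xs m) + K.sup' hK (c (xs m))))
    (hopt_def : opt = sInf {v : ℝ | ∃ x ∈ F, v = ψ x + K.sup' hK (c x)}) :
    (∀ n, LB n ≤ LB (n + 1)) ∧
    (∀ n, UB (n + 1) ≤ UB n) ∧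
    (∀ n, LB n ≤ opt ∧ opt ≤ UB n) ∧
    (∃ n ≤ K.card, LB n = UB n) := by
  have hLB_opt : ∀ n, LB n ≤ opt := fun n => by
    rw [hLB, hopt_def]
    exact le_csInf ⟨_, xs 0, hfeas 0, rfl⟩ fun v ⟨x, hx, hv⟩ =>
      hv ▸ add_sup'_le_of_forall_le_of_subset (hTne n) (hTK n) (hopt n) hx
  have hopt_UB : ∀ n, opt ≤ UB n := fun n => by
    rw [hUB, hopt_def]
    exact le_inf' _ _ fun m _ => csInf_le hbdd ⟨xs m, hfeas m, rfl⟩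
  refine ⟨fun n => ?_, fun n => ?_, fun n => ⟨hLB_opt n, hopt_UB n⟩, ?_⟩
  · rw [hLB, hLB]
    exact add_sup'_le_of_forall_le_of_subset (hTne n) (hTsucc n ▸ subset_insert _ _) (hopt n)
      (hfeas (n + 1))
  · rw [hUB, hUB]
    exact inf'_mono _ (range_subset_range.2 (n + 1).le_succ) _
  obtain ⟨n, hn, hsel_mem⟩ := exists_lt_card_mem_of_insert hTsucc hTK (hTne 0)
  refine ⟨n, hn.le, ((hLB_opt n).trans (hopt_UB n)).antisymm ?_⟩
  rw [hUB, hLB, sup'_eq_sup'_of_subset_of_forall_le (hTK n) hsel_mem (hsel n).2]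
  exact inf'_le _ (self_mem_range_succ n)
end
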